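/- arXiv:math/0610935 — 2 statements merged into one kernel-verified Lean document; each statement's English description precedes it below -/
import Mathlib

section
/- If a connected graph G with Trémaux tree T admits an F-coloring, then it admits a strong F-coloring, i.e., an F-coloring in which for every vertex v the low set L(v) = {non-tree edges f ⪰ v with low(f) = low(v)} is monochromatic. -/
variable {V : Type*}

/-- Tree order: `x ⪯ y` iff `x` lies on the unique `T`-path from the root `r` to `y`. -/
def tle (T : SimpleGraph V) (r x y : V) : Prop :=
  ∃ p : T.Walk r y, p.IsPath ∧ x ∈ p.support

/-- Strict tree order. -/
def stle (T : SimpleGraph V) (r x y : V) : Prop :=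
  tle T r x y ∧ x ≠ y

/-- `T` is a Trémaux tree of `G` rooted at `r`. -/
def IsTremaux (G T : SimpleGraph V) (r : V) : Prop :=
  T ≤ G ∧ T.IsTree ∧ ∀ x y, G.Adj x y → tle T r x y ∨ tle T r y x

/-- A back edge (non-tree edge), oriented downward: `a` is the upper endpoint, `b ≺ a`. -/
def BackEdge (G T : SimpleGraph V) (r a b : V) : Prop :=
  G.Adj a b ∧ ¬ T.Adj a b ∧ stle T r b a

/-- The set of which `low v` is the minimum: `v` together with all vertices joined
by a non-tree edge to a descendant of `v`. -/
def lowSet (G T : SimpleGraph V) (r v : V) : Set V :=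
  {v} ∪ {u | ∃ w, tle T r v w ∧ G.Adj u w ∧ ¬ T.Adj u w}

/-- `l` is the low point of the vertex `v`. -/
def IsLow (G T : SimpleGraph V) (r v l : V) : Prop :=
  l ∈ lowSet G T r v ∧ ∀ u ∈ lowSet G T r v, tle T r l u

/-- The edge from `v` to `w` is an edge going out of `v`: either a tree edge going up,
or a back edge going down. -/
def OutEdge (G T : SimpleGraph V) (r v w : V) : Prop :=
  (T.Adj v w ∧ stle T r v w) ∨ BackEdge G T r v w

/-- The back edge `(a,b)` lies above the edge `(v,w)` going out of `v`
(i.e. `f ⪰ e` in the order extended to edges). -/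
def AboveE (T : SimpleGraph V) (r v w a b : V) : Prop :=
  (T.Adj v w ∧ tle T r w a) ∨ (¬ T.Adj v w ∧ a = v ∧ b = w)

/-- Membership in the fringe of the edge `(v,w)` going out of `v`:
back edges `f = (a,b) ⪰ e` with `low f = b ≺ v`. -/
def InFringe (G T : SimpleGraph V) (r v w a b : V) : Prop :=
  BackEdge G T r a b ∧ AboveE T r v w a b ∧ stle T r b v

/-- The set of which `low e` is the minimum, for an edge `e = (v,w)` going out of `v`. -/
def lowESet (G T : SimpleGraph V) (r v w : V) : Set V :=
  {u | (T.Adj v w ∧ (u = v ∨ u ∈ lowSet G T r w)) ∨ (¬ T.Adj v w ∧ u = w)}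

/-- `l` is the low point of the edge `(v,w)` going out of `v`. -/
def IsLowE (G T : SimpleGraph V) (r v w l : V) : Prop :=
  l ∈ lowESet G T r v w ∧ ∀ u ∈ lowESet G T r v w, tle T r l u

/-- Membership in `Interlaced(e₁, e₂)` where `e₁ = (v,w₁)` and `l₂ = low e₂`:
back edges in the fringe of `e₁` whose low is strictly above `l₂`. -/
def InInterlaced (G T : SimpleGraph V) (r v w₁ l₂ a b : V) : Prop :=
  InFringe G T r v w₁ a b ∧ stle T r l₂ b

/-- `c` is an F-coloring of the back edges of `(G,T)` by `{-1,+1}`. -/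
def FColoring (G T : SimpleGraph V) (r : V) (c : V → V → ℤ) : Prop :=
  (∀ a b, BackEdge G T r a b → c a b = 1 ∨ c a b = -1) ∧
  ∀ v w₁ w₂ l₁ l₂, OutEdge G T r v w₁ → OutEdge G T r v w₂ → w₁ ≠ w₂ →
    IsLowE G T r v w₁ l₁ → IsLowE G T r v w₂ l₂ →
    (∀ a b a' b', InInterlaced G T r v w₁ l₂ a b →
        InInterlaced G T r v w₁ l₂ a' b' → c a b = c a' b') ∧
    (∀ a b a' b', InInterlaced G T r v w₂ l₁ a b →
        InInterlaced G T r v w₂ l₁ a' b' → c a b = c a' b') ∧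
    (∀ a b a' b', InInterlaced G T r v w₁ l₂ a b →
        InInterlaced G T r v w₂ l₁ a' b' → c a b ≠ c a' b')

/-- A strong F-coloring additionally makes each low set `L(v)` monochromatic. -/
def StrongAtLows (G T : SimpleGraph V) (r : V) (c : V → V → ℤ) : Prop :=
  ∀ v l, IsLow G T r v l →
    ∀ a b a' b', BackEdge G T r a b → tle T r v a → b = l →
      BackEdge G T r a' b' → tle T r v a' → b' = l → c a b = c a' b'

/-- `H` is a minor of `G` (branch-set formulation). -/
def IsMinorOf {W V : Type*} (H : SimpleGraph W) (G : SimpleGraph V) : Prop :=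
  ∃ ρ : V → Option W,
    (∀ w, ∃ v, ρ v = some w) ∧
    (∀ w, (G.induce {v | ρ v = some w}).Connected) ∧
    (∀ w₁ w₂, H.Adj w₁ w₂ → ∃ v₁ v₂, ρ v₁ = some w₁ ∧ ρ v₂ = some w₂ ∧ G.Adj v₁ v₂)

/-- Planarity (Kuratowski–Wagner characterization): no `K₅` and no `K₃,₃` minor. -/
def Planar (G : SimpleGraph V) : Prop :=
  ¬ IsMinorOf (SimpleGraph.completeGraph (Fin 5)) G ∧
  ¬ IsMinorOf (completeBipartiteGraph (Fin 3) (Fin 3)) G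

/-!
Recolor every back edge `(a, b)` with the color of one fixed edge of `L(m)`, where `m` is the
least ancestor of `a` with `low m = b`. Two edges of the same `L(v)` share this `m` (it lies
below `v`), so each `L(v)` becomes monochromatic. An edge `(a, b)` of `Interlaced(e₁, e₂)` at `v`
keeps its color: `m` cannot lie below `v`, since then `low m ⪯ low e₂ ≺ b`, so `m` lies above
the tree edge `e₁`; hence the representative of `L(m)` is again in `Interlaced(e₁, e₂)`, which
is monochromatic.
-/

open SimpleGraph

section TreeOrder

variable {T : SimpleGraph V} {r : V}

lemma SimpleGraph.IsTree.walk_eq_of_isPath (hT : T.IsTree) {x y : V} {p q : T.Walk x y}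
    (hp : p.IsPath) (hq : q.IsPath) : p = q :=
  (hT.existsUnique_path x y).unique hp hq

lemma SimpleGraph.IsTree.length_eq_dist (hT : T.IsTree) {x y : V} {p : T.Walk x y} (hp : p.IsPath) :
    p.length = T.dist x y := by
  obtain ⟨q, hq⟩ := hT.connected.exists_walk_length_eq_dist x y
  rw [hT.walk_eq_of_isPath hp (q.isPath_of_length_eq_dist hq), hq]

lemma tle_iff_support_prefix (hT : T.IsTree) {x y : V} {p : T.Walk r x} {q : T.Walk r y}
    (hp : p.IsPath) (hq : q.IsPath) : tle T r x y ↔ p.support <+: q.support := by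
  classical
  constructor
  · rintro ⟨q', hq', hx⟩
    obtain rfl := hT.walk_eq_of_isPath hq' hq
    rw [hT.walk_eq_of_isPath hp (hq'.takeUntil hx)]
    exact q'.support_takeUntil_prefix_support hx
  · exact fun h => ⟨q, hq, h.subset p.end_mem_support⟩

lemma tle_refl (hT : T.IsTree) (x : V) : tle T r x x := by
  obtain ⟨p, hp⟩ := (hT.existsUnique_path r x).exists
  exact ⟨p, hp, p.end_mem_support⟩

lemma tle_trans (hT : T.IsTree) {x y z : V} (hxy : tle T r x y) (hyz : tle T r y z) :
    tle T r x z := by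
  obtain ⟨p, hp⟩ := (hT.existsUnique_path r x).exists
  obtain ⟨q, hq⟩ := (hT.existsUnique_path r y).exists
  obtain ⟨o, ho⟩ := (hT.existsUnique_path r z).exists
  rw [tle_iff_support_prefix hT hp hq] at hxy
  rw [tle_iff_support_prefix hT hq ho] at hyz
  exact (tle_iff_support_prefix hT hp ho).2 (hxy.trans hyz)

lemma tle_antisymm (hT : T.IsTree) {x y : V} (hxy : tle T r x y) (hyx : tle T r y x) :
    x = y := by
  obtain ⟨p, hp⟩ := (hT.existsUnique_path r x).exists
  obtain ⟨q, hq⟩ := (hT.existsUnique_path r y).exists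
  rw [tle_iff_support_prefix hT hp hq] at hxy
  rw [tle_iff_support_prefix hT hq hp] at hyx
  have hpq := hxy.eq_of_length (hxy.length_le.antisymm hyx.length_le)
  rw [← p.getLast_support, ← q.getLast_support]
  simp only [hpq]

lemma tle_total_of_tle (hT : T.IsTree) {x y a : V} (hx : tle T r x a) (hy : tle T r y a) :
    tle T r x y ∨ tle T r y x := by
  obtain ⟨p, hp⟩ := (hT.existsUnique_path r x).exists
  obtain ⟨q, hq⟩ := (hT.existsUnique_path r y).exists
  obtain ⟨o, ho⟩ := (hT.existsUnique_path r a).exists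
  rw [tle_iff_support_prefix hT hp ho] at hx
  rw [tle_iff_support_prefix hT hq ho] at hy
  rw [tle_iff_support_prefix hT hp hq, tle_iff_support_prefix hT hq hp]
  exact List.prefix_or_prefix_of_prefix hx hy

lemma dist_lt_of_stle (hT : T.IsTree) {x y : V} (h : stle T r x y) :
    T.dist r x < T.dist r y := by
  obtain ⟨p, hp⟩ := (hT.existsUnique_path r x).exists
  obtain ⟨q, hq⟩ := (hT.existsUnique_path r y).exists
  have hpq := (tle_iff_support_prefix hT hp hq).1 h.1
  rw [← hT.length_eq_dist hp, ← hT.length_eq_dist hq]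
  refine lt_of_le_of_ne (by simpa using hpq.length_le) fun hlen => h.2 ?_
  refine tle_antisymm hT h.1 ((tle_iff_support_prefix hT hq hp).2 ?_)
  rw [hpq.eq_of_length (by simp [hlen])]

lemma exists_least_tle (hT : T.IsTree) {P : V → Prop} {a : V} (h : ∃ u, tle T r u a ∧ P u) :
    ∃ m, (tle T r m a ∧ P m) ∧ ∀ u, tle T r u a → P u → tle T r m u := by
  obtain ⟨m, hm, hmin⟩ := (measure (T.dist r)).wf.has_min {u | tle T r u a ∧ P u} h
  refine ⟨m, hm, fun u hua hu => ?_⟩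
  rcases tle_total_of_tle hT hm.1 hua with hmu | hum
  · exact hmu
  · by_cases hmu : u = m
    · exact hmu ▸ tle_refl hT u
    · exact absurd (dist_lt_of_stle hT ⟨hum, hmu⟩) (hmin u ⟨hua, hu⟩)

lemma tle_or_eq_of_tle_of_adj (hT : T.IsTree) {v w m : V} (hadj : T.Adj v w)
    (hvw : stle T r v w) (hm : tle T r m w) : tle T r m v ∨ m = w := by
  obtain ⟨p, hp⟩ := (hT.existsUnique_path r v).exists
  have hw : w ∉ p.support := fun hw => hvw.2 (tle_antisymm hT hvw.1 ⟨p, hp, hw⟩)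
  obtain ⟨q, hq, hmq⟩ := hm
  rw [hT.walk_eq_of_isPath hq (hp.concat hw hadj), Walk.support_concat] at hmq
  simp only [List.mem_append, List.mem_singleton] at hmq
  exact hmq.imp_left fun hm => ⟨p, hp, hm⟩

end TreeOrder

section Recoloring

variable {G T : SimpleGraph V} {r : V}

lemma OutEdge.stle_of_adj {v w : V} (ho : OutEdge G T r v w) (hadj : T.Adj v w) :
    stle T r v w :=
  ho.elim And.right fun hbe => absurd hadj hbe.2.1

lemma IsLowE.mem_lowSet_or_tle (hT : T.IsTree) {v w l m : V} (ho : OutEdge G T r v w)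
    (hl : IsLowE G T r v w l) (hmv : tle T r m v) : l ∈ lowSet G T r m ∨ tle T r v l := by
  rcases hl.1 with ⟨hadj, rfl | rfl | ⟨x, hwx, hlx, hnlx⟩⟩ | ⟨hnadj, rfl⟩
  · exact Or.inr (tle_refl hT l)
  · exact Or.inr (ho.stle_of_adj hadj).1
  · have hmx := tle_trans hT hmv (tle_trans hT (ho.stle_of_adj hadj).1 hwx)
    exact Or.inl (Or.inr ⟨x, hmx, hlx, hnlx⟩)
  · rcases ho with ⟨hadj, -⟩ | ⟨hG, hnT, -⟩
    · exact absurd hadj hnadj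
    · exact Or.inl (Or.inr ⟨v, hmv, hG.symm, fun h => hnT h.symm⟩)

lemma not_isLow_of_stle_lowE (hT : T.IsTree) {v w l b m : V} (ho : OutEdge G T r v w)
    (hl : IsLowE G T r v w l) (hlb : stle T r l b) (hbv : stle T r b v) (hmv : tle T r m v) :
    ¬ IsLow G T r m b := by
  intro hm
  rcases hl.mem_lowSet_or_tle hT ho hmv with hmem | hvl
  · exact hlb.2 (tle_antisymm hT hlb.1 (hm.2 l hmem))
  · exact hbv.2 (tle_antisymm hT hbv.1 (tle_trans hT hvl hlb.1))

lemma FColoring.of_eq_on_interlaced {c c' : V → V → ℤ} (hc : FColoring G T r c)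
    (hsign : ∀ a b, BackEdge G T r a b → c' a b = 1 ∨ c' a b = -1)
    (heq : ∀ v w₁ w₂ l₁ l₂, OutEdge G T r v w₁ → OutEdge G T r v w₂ → w₁ ≠ w₂ →
      IsLowE G T r v w₁ l₁ → IsLowE G T r v w₂ l₂ →
      ∀ a b, InInterlaced G T r v w₁ l₂ a b → c' a b = c a b) :
    FColoring G T r c' := by
  refine ⟨hsign, fun v w₁ w₂ l₁ l₂ ho₁ ho₂ hw hl₁ hl₂ => ?_⟩
  have eq₁ := heq v w₁ w₂ l₁ l₂ ho₁ ho₂ hw hl₁ hl₂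
  have eq₂ := heq v w₂ w₁ l₂ l₁ ho₂ ho₁ hw.symm hl₂ hl₁
  obtain ⟨mono₁, mono₂, diff⟩ := hc.2 v w₁ w₂ l₁ l₂ ho₁ ho₂ hw hl₁ hl₂
  refine ⟨fun a b a' b' h h' => ?_, fun a b a' b' h h' => ?_, fun a b a' b' h h' => ?_⟩
  · rw [eq₁ a b h, eq₁ a' b' h']; exact mono₁ a b a' b' h h'
  · rw [eq₂ a b h, eq₂ a' b' h']; exact mono₂ a b a' b' h h'
  · rw [eq₁ a b h, eq₂ a' b' h']; exact diff a b a' b' h h'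

variable (G T r) in
def IsLeastLowAncestor (a b m : V) : Prop :=
  tle T r m a ∧ IsLow G T r m b ∧ ∀ u, tle T r u a → IsLow G T r u b → tle T r m u

lemma exists_isLeastLowAncestor (hT : T.IsTree) {a b u : V} (hua : tle T r u a)
    (hu : IsLow G T r u b) : ∃ m, IsLeastLowAncestor G T r a b m := by
  obtain ⟨m, ⟨hma, hm⟩, hmin⟩ := exists_least_tle (P := (IsLow G T r · b)) hT ⟨u, hua, hu⟩
  exact ⟨m, hma, hm, hmin⟩

lemma IsLeastLowAncestor.eq (hT : T.IsTree) {a a' b m m' v : V}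
    (hm : IsLeastLowAncestor G T r a b m) (hm' : IsLeastLowAncestor G T r a' b m')
    (hv : IsLow G T r v b) (hva : tle T r v a) (hva' : tle T r v a') : m = m' := by
  have hmv := hm.2.2 v hva hv
  have hm'v := hm'.2.2 v hva' hv
  exact tle_antisymm hT (hm.2.2 m' (tle_trans hT hm'v hva) hm'.2.1)
    (hm'.2.2 m (tle_trans hT hmv hva') hm.2.1)

open Classical in
variable (G T r) in
/-- For `b = low m`, `(lowRep G T r m b, b)` is a fixed edge of `L(m)`. -/
noncomputable def lowRep (m b : V) : V :=
  if h : ∃ a, BackEdge G T r a b ∧ tle T r m a then h.choose else m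

lemma lowRep_spec {m b : V} (h : ∃ a, BackEdge G T r a b ∧ tle T r m a) :
    BackEdge G T r (lowRep G T r m b) b ∧ tle T r m (lowRep G T r m b) := by
  rw [lowRep, dif_pos h]
  exact h.choose_spec

open Classical in
variable (G T r) in
noncomputable def strongRecolor (c : V → V → ℤ) (a b : V) : ℤ :=
  if h : ∃ m, IsLeastLowAncestor G T r a b m then c (lowRep G T r h.choose b) b else c a b

variable {c : V → V → ℤ}

lemma strongRecolor_of_isLeastLowAncestor (hT : T.IsTree) {a b m : V}
    (hm : IsLeastLowAncestor G T r a b m) :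
    strongRecolor G T r c a b = c (lowRep G T r m b) b := by
  have h : ∃ m, IsLeastLowAncestor G T r a b m := ⟨m, hm⟩
  rw [strongRecolor, dif_pos h, h.choose_spec.eq hT hm hm.2.1 hm.1 hm.1]

lemma strongRecolor_sign (hc : FColoring G T r c) {a b : V} (hab : BackEdge G T r a b) :
    strongRecolor G T r c a b = 1 ∨ strongRecolor G T r c a b = -1 := by
  unfold strongRecolor
  split_ifs with h
  · exact hc.1 _ _ (lowRep_spec ⟨a, hab, h.choose_spec.1⟩).1
  · exact hc.1 a b hab

lemma strongRecolor_of_inInterlaced (hT : T.IsTree) (hc : FColoring G T r c)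
    {v w₁ w₂ l₁ l₂ a b : V} (ho₁ : OutEdge G T r v w₁) (ho₂ : OutEdge G T r v w₂)
    (hw : w₁ ≠ w₂) (hl₁ : IsLowE G T r v w₁ l₁) (hl₂ : IsLowE G T r v w₂ l₂)
    (hf : InInterlaced G T r v w₁ l₂ a b) :
    strongRecolor G T r c a b = c a b := by
  obtain ⟨⟨hab, habove, hbv⟩, hl₂b⟩ := id hf
  by_cases hex : ∃ m, IsLeastLowAncestor G T r a b m
  swap
  · exact dif_neg hex
  obtain ⟨m, hm⟩ := hex
  rw [strongRecolor_of_isLeastLowAncestor hT hm]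
  have hmv : ¬ tle T r m v := fun hmv => not_isLow_of_stle_lowE hT ho₂ hl₂ hl₂b hbv hmv hm.2.1
  obtain ⟨hadj, hw₁a⟩ : T.Adj v w₁ ∧ tle T r w₁ a := by
    rcases habove with h | ⟨-, rfl, -⟩
    · exact h
    · exact absurd hm.1 hmv
  have hvw₁ := ho₁.stle_of_adj hadj
  have hw₁m : tle T r w₁ m := by
    rcases tle_total_of_tle hT hm.1 hw₁a with hmw₁ | hw₁m
    · rcases tle_or_eq_of_tle_of_adj hT hadj hvw₁ hmw₁ with hmv' | rfl
      · exact absurd hmv' hmv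
      · exact tle_refl hT m
    · exact hw₁m
  obtain ⟨hrep, hmrep⟩ := lowRep_spec ⟨a, hab, hm.1⟩
  have hrepf : InInterlaced G T r v w₁ l₂ (lowRep G T r m b) b :=
    ⟨⟨hrep, Or.inl ⟨hadj, tle_trans hT hw₁m hmrep⟩, hbv⟩, hl₂b⟩
  exact (hc.2 v w₁ w₂ l₁ l₂ ho₁ ho₂ hw hl₁ hl₂).1 _ _ _ _ hrepf hf

lemma strongAtLows_strongRecolor (hT : T.IsTree) :
    StrongAtLows G T r (strongRecolor G T r c) := by
  rintro v l hv a b a' b' - hva rfl - hva' rfl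
  obtain ⟨m, hm⟩ := exists_isLeastLowAncestor hT hva hv
  obtain ⟨m', hm'⟩ := exists_isLeastLowAncestor hT hva' hv
  rw [strongRecolor_of_isLeastLowAncestor hT hm, strongRecolor_of_isLeastLowAncestor hT hm',
    hm.eq hT hm' hv hva hva']

end Recoloring

theorem stmt11_general (G T : SimpleGraph V) (r : V)
    (h : IsTremaux G T r) (hc : ∃ c, FColoring G T r c) :
    ∃ c, FColoring G T r c ∧ StrongAtLows G T r c := by
  obtain ⟨c, hc⟩ := hc
  have hT := h.2.1
  refine ⟨strongRecolor G T r c, ?_, strongAtLows_strongRecolor hT⟩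
  exact hc.of_eq_on_interlaced (fun _ _ => strongRecolor_sign hc)
    fun _ _ _ _ _ ho₁ ho₂ hw hl₁ hl₂ _ _ => strongRecolor_of_inInterlaced hT hc ho₁ ho₂ hw hl₁ hl₂

/-- if `G` admits an F-coloring then it admits a strong F-coloring. -/
theorem stmt11 [Fintype V] (G T : SimpleGraph V) (r : V)
    (h : IsTremaux G T r) (hc : ∃ c, FColoring G T r c) :
    ∃ c, FColoring G T r c ∧ StrongAtLows G T r c :=
  stmt11_general G T r h hc
end

section
/- Let T be a Trémaux tree of a connected graph G. For every vertex v other than the root with parent edge e = (u,v), the fringe Fringe(e) equals the union over all edges e' outgoing from v of the set {f ∈ Fringe(e') : low(f) ≺ u} together with the non-tree edges (v, w) with w ≺ u, where for a non-tree edge e' outgoing from v, Fringe(e') = {e'} if low(e') ≺ v and ∅ otherwise. -/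
variable {V : Type*}

/-!
A back edge `(a, b)` with `v ⪯ a` either starts at `v`, or `a` lies above the child `w` of `v` on
the tree path to `a`, and then it belongs to the fringe of the tree edge `(v, w)`. Conversely every
edge of such a fringe starts at or above `v`. The fringe condition `b ≺ v` follows from `b ≺ u ≺ v`.
-/

namespace SimpleGraph

variable {T : SimpleGraph V} {r x y z : V}

lemma Preconnected.tle_refl (hT : T.Preconnected) (r x : V) : tle T r x x := by
  classical
  obtain ⟨p⟩ := hT r x
  exact ⟨p.toPath, p.toPath.2, Walk.end_mem_support _⟩

lemma IsAcyclic.takeUntil_eq [DecidableEq V] (hT : T.IsAcyclic) {p : T.Walk r y} (hp : p.IsPath)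
    (hx : x ∈ p.support) {q : T.Walk r x} (hq : q.IsPath) : p.takeUntil x hx = q :=
  congrArg Subtype.val ((hT.subsingleton_path r x).elim ⟨_, hp.takeUntil hx⟩ ⟨q, hq⟩)

lemma IsAcyclic.tle_trans (hT : T.IsAcyclic) (hxy : tle T r x y) (hyz : tle T r y z) :
    tle T r x z := by
  classical
  obtain ⟨p, hp, hx⟩ := hxy
  obtain ⟨q, hq, hy⟩ := hyz
  refine ⟨q, hq, q.support_takeUntil_subset_support hy ?_⟩
  rwa [hT.takeUntil_eq hq hy hp]

lemma IsAcyclic.tle_antisymm (hT : T.IsAcyclic) (hxy : tle T r x y) (hyx : tle T r y x) :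
    x = y := by
  classical
  by_contra hne
  obtain ⟨p, hp, hx⟩ := hxy
  obtain ⟨q, hq, hy⟩ := hyx
  have hqp := Walk.length_takeUntil_lt_length hx hne
  have hpq := Walk.length_takeUntil_lt_length hy (Ne.symm hne)
  rw [hT.takeUntil_eq hp hx hq] at hqp
  rw [hT.takeUntil_eq hq hy hp] at hpq
  omega

lemma IsAcyclic.stle_of_stle_of_tle (hT : T.IsAcyclic) (hxy : stle T r x y)
    (hyz : tle T r y z) : stle T r x z :=
  ⟨hT.tle_trans hxy.1 hyz, fun hxz => hxy.2 (hT.tle_antisymm hxy.1 (hxz ▸ hyz))⟩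

end SimpleGraph

section

open SimpleGraph

variable {T : SimpleGraph V} {r x y : V}

lemma exists_child_of_tle (hxy : tle T r x y) (hne : x ≠ y) :
    ∃ w, T.Adj x w ∧ stle T r x w ∧ tle T r w y := by
  classical
  obtain ⟨p, hp, hx⟩ := hxy
  cases hd : p.dropUntil x hx with
  | nil => exact absurd rfl hne
  | @cons _ w _ hxw q =>
    have hsplit : ((p.takeUntil x hx).concat hxw).append q = p := by
      rw [Walk.concat_append, ← hd, Walk.take_spec]
    refine ⟨w, hxw, ⟨⟨_, (hsplit.symm ▸ hp).of_append_left, ?_⟩, hxw.ne⟩, p, hp, ?_⟩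
    · simp
    · rw [← hsplit]; simp

lemma tle_of_outEdge_of_aboveE {G : SimpleGraph V} (hT : T.IsAcyclic) (hr : T.Preconnected)
    {v w a b : V} (hw : OutEdge G T r v w) (habove : AboveE T r v w a b) : tle T r v a := by
  rcases habove with ⟨hvw, hwa⟩ | ⟨-, rfl, -⟩
  · rcases hw with ⟨-, hsvw⟩ | hback
    · exact hT.tle_trans hsvw.1 hwa
    · exact absurd hvw hback.2.1
  · exact hr.tle_refl r _

end

theorem stmt17_general (G T : SimpleGraph V) (r : V)
    (h : IsTremaux G T r) (u v : V) (huv : stle T r u v) :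
    ∀ a b, (BackEdge G T r a b ∧ tle T r v a ∧ stle T r b u) ↔
      ((∃ w, OutEdge G T r v w ∧ InFringe G T r v w a b ∧ stle T r b u) ∨
        (BackEdge G T r a b ∧ a = v ∧ stle T r b u)) := by
  obtain ⟨hacyc, hconn⟩ : T.IsAcyclic ∧ T.Preconnected :=
    ⟨h.2.1.isAcyclic, h.2.1.connected.preconnected⟩
  intro a b
  constructor
  · rintro ⟨hab, hva, hbu⟩
    by_cases hav : a = v
    · exact Or.inr ⟨hab, hav, hbu⟩
    obtain ⟨w, hvw, hsvw, hwa⟩ := exists_child_of_tle hva (Ne.symm hav)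
    exact Or.inl ⟨w, Or.inl ⟨hvw, hsvw⟩,
      ⟨hab, Or.inl ⟨hvw, hwa⟩, hacyc.stle_of_stle_of_tle hbu huv.1⟩, hbu⟩
  · rintro (⟨w, hw, ⟨hab, habove, -⟩, hbu⟩ | ⟨hab, rfl, hbu⟩)
    · exact ⟨hab, tle_of_outEdge_of_aboveE hacyc hconn hw habove, hbu⟩
    · exact ⟨hab, hconn.tle_refl r a, hbu⟩

/-- decomposition of the fringe of the parent edge `(u,v)` of `v`:
it is the union, over edges `e'` going out of `v`, of the back edges of
`Fringe(e')` with low `≺ u`, together with the back edges `(v,w)` with `w ≺ u`. -/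
theorem stmt17 [Fintype V] (G T : SimpleGraph V) (r : V)
    (h : IsTremaux G T r) (u v : V) (he : T.Adj u v) (huv : stle T r u v) :
    ∀ a b, (BackEdge G T r a b ∧ tle T r v a ∧ stle T r b u) ↔
      ((∃ w, OutEdge G T r v w ∧ InFringe G T r v w a b ∧ stle T r b u) ∨
        (BackEdge G T r a b ∧ a = v ∧ stle T r b u)) :=
  stmt17_general G T r h u v huv
end
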